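/- arXiv:2206.13723 — 3 statements merged into one kernel-verified Lean document; each statement's English description precedes it below -/
import Mathlib

section
/- Let V : [0,T) → ℝ be nonnegative, differentiable, and satisfy V'(t) = δ₁ V(t) − δ₂ V(t)/𝒞(t), where δ₁ ≥ 0, δ₂ > 0, and 𝒞 : [0,T) → (0,∞) is continuous, monotonically decreasing, with 𝒞(t) → 0 as t → T⁻ and ∫₀ᵀ dt/𝒞(t) = +∞. If δ₂ > δ₁·𝒞(0), then V(t) → 0 as t → T⁻. -/
/-!
Since `𝒞` is decreasing and `V ≥ 0`, the perturbation is absorbed into the gain: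
`V' ≤ -ρ V` with `ρ = (δ₂ - δ₁ 𝒞(0)) / 𝒞`. Then `V · exp (∫₀ᵗ ρ)` is nonincreasing, so
`V t ≤ V 0 · exp (-∫₀ᵗ ρ)`, which tends to `0` because `∫₀ᵗ 1/𝒞` diverges as `t → T⁻`.
-/

open Filter Set Topology Real

theorem le_mul_exp_neg_integral_of_deriv_le {V V' ρ : ℝ → ℝ} {a b : ℝ} (hab : a ≤ b)
    (hρ : ContinuousOn ρ (Icc a b)) (hV : ContinuousOn V (Icc a b))
    (hV' : ∀ x ∈ Ioo a b, HasDerivAt V (V' x) x) (hle : ∀ x ∈ Ioo a b, V' x ≤ -(ρ x * V x)) :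
    V b ≤ V a * exp (-∫ x in a..b, ρ x) := by
  set G : ℝ → ℝ := fun s => ∫ x in a..s, ρ x
  have hG : ContinuousOn G (Icc a b) := by
    have := intervalIntegral.continuousOn_primitive_interval (μ := MeasureTheory.volume) (f := ρ)
      (a := a) (b := b)
    rw [uIcc_of_le hab] at this
    exact this hρ.integrableOn_Icc
  have hG' : ∀ x ∈ Ioo a b, HasDerivAt G (ρ x) x := fun x hx =>
    intervalIntegral.integral_hasDerivAt_right
      ((hρ.mono (Icc_subset_Icc_right hx.2.le)).intervalIntegrable_of_Icc hx.1.le)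
      ((hρ.mono Ioo_subset_Icc_self).stronglyMeasurableAtFilter isOpen_Ioo x hx)
      (hρ.continuousAt (Icc_mem_nhds hx.1 hx.2))
  have hanti : AntitoneOn (fun x => V x * exp (G x)) (Icc a b) := by
    refine antitoneOn_of_hasDerivWithinAt_nonpos (convex_Icc a b) (hV.mul hG.rexp)
      (f' := fun x => V' x * exp (G x) + V x * (exp (G x) * ρ x)) ?_ ?_
    · intro x hx
      rw [interior_Icc] at hx
      exact ((hV' x hx).mul (hG' x hx).exp).hasDerivWithinAt
    · intro x hx
      rw [interior_Icc] at hx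
      calc V' x * exp (G x) + V x * (exp (G x) * ρ x) = exp (G x) * (V' x + ρ x * V x) := by ring
        _ ≤ 0 := mul_nonpos_of_nonneg_of_nonpos (exp_pos _).le (by linarith [hle x hx])
  have hGa : G a = 0 := intervalIntegral.integral_same
  have hab_mono := hanti (left_mem_Icc.2 hab) (right_mem_Icc.2 hab) hab
  simp only [hGa, exp_zero, mul_one] at hab_mono
  rw [exp_neg, ← div_eq_mul_inv, le_div_iff₀ (exp_pos _)]
  exact hab_mono

theorem tendsto_nhdsLT_zero_of_deriv_le_neg_mul {V V' ρ : ℝ → ℝ} {a T : ℝ} (haT : a < T)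
    (hρ : ContinuousOn ρ (Ico a T)) (hV' : ∀ t ∈ Ico a T, HasDerivAt V (V' t) t)
    (hle : ∀ t ∈ Ico a T, V' t ≤ -(ρ t * V t)) (hV : ∀ t ∈ Ico a T, 0 ≤ V t)
    (hdiv : Tendsto (fun s => ∫ t in a..s, ρ t) (𝓝[<] T) atTop) :
    Tendsto V (𝓝[<] T) (𝓝 0) := by
  have hmem : ∀ᶠ t in 𝓝[<] T, t ∈ Ico a T :=
    Filter.mem_of_superset (Ioo_mem_nhdsLT haT) Ioo_subset_Ico_self
  have hbound : ∀ t ∈ Ico a T, V t ≤ V a * exp (-∫ x in a..t, ρ x) := fun t ht => by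
    have hsub : Icc a t ⊆ Ico a T := Icc_subset_Ico_right ht.2
    exact le_mul_exp_neg_integral_of_deriv_le ht.1 (hρ.mono hsub)
      (fun x hx => (hV' x (hsub hx)).continuousAt.continuousWithinAt)
      (fun x hx => hV' x (hsub (Ioo_subset_Icc_self hx)))
      (fun x hx => hle x (hsub (Ioo_subset_Icc_self hx)))
  have hlim : Tendsto (fun t => V a * exp (-∫ x in a..t, ρ x)) (𝓝[<] T) (𝓝 0) := by
    simpa using (tendsto_exp_atBot.comp (tendsto_neg_atTop_atBot.comp hdiv)).const_mul (V a)
  exact tendsto_of_tendsto_of_tendsto_of_le_of_le' tendsto_const_nhds hlim (hmem.mono hV)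
    (hmem.mono hbound)

theorem perturbed_linear_rate_le {δ₁ δ₂ v c c₀ : ℝ} (hδ₁ : 0 ≤ δ₁) (hv : 0 ≤ v) (hc : 0 < c)
    (hcc₀ : c ≤ c₀) : δ₁ * v - δ₂ * v / c ≤ -((δ₂ - δ₁ * c₀) * (1 / c) * v) := by
  have hgap : δ₁ * v - δ₂ * v / c + (δ₂ - δ₁ * c₀) * (1 / c) * v = δ₁ * v * (c - c₀) / c := by
    field_simp
    ring
  have : δ₁ * v * (c - c₀) / c ≤ 0 :=
    div_nonpos_of_nonpos_of_nonneg
      (mul_nonpos_of_nonneg_of_nonpos (mul_nonneg hδ₁ hv) (sub_nonpos.2 hcc₀)) hc.le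
  linarith

theorem pt_perturbed_linear_model_general (T δ₁ δ₂ : ℝ) (V C : ℝ → ℝ) (hT : 0 < T)
    (hδ₁ : 0 ≤ δ₁)
    (hVnn : ∀ t ∈ Set.Ico (0:ℝ) T, 0 ≤ V t)
    (hCcont : ContinuousOn C (Set.Ico 0 T))
    (hCpos : ∀ t ∈ Set.Ico (0:ℝ) T, 0 < C t)
    (hCanti : AntitoneOn C (Set.Ico 0 T))
    (hODE : ∀ t ∈ Set.Ico (0:ℝ) T, HasDerivAt V (δ₁ * V t - δ₂ * V t / C t) t)
    (hdiv : Tendsto (fun s : ℝ => ∫ t in (0:ℝ)..s, 1 / C t) (𝓝[<] T) atTop)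
    (hgain : δ₁ * C 0 < δ₂) :
    Tendsto V (𝓝[<] T) (𝓝 0) := by
  have hk : 0 < δ₂ - δ₁ * C 0 := sub_pos.2 hgain
  refine tendsto_nhdsLT_zero_of_deriv_le_neg_mul (ρ := fun t => (δ₂ - δ₁ * C 0) * (1 / C t)) hT
    (continuousOn_const.mul (continuousOn_const.div hCcont fun t ht => (hCpos t ht).ne')) hODE
    (fun t ht => perturbed_linear_rate_le hδ₁ (hVnn t ht) (hCpos t ht)
      (hCanti ⟨le_rfl, hT⟩ ht ht.1)) hVnn ?_
  simpa only [intervalIntegral.integral_const_mul] using hdiv.const_mul_atTop hk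

theorem pt_perturbed_linear_model (T δ₁ δ₂ : ℝ) (V C : ℝ → ℝ) (hT : 0 < T)
    (hδ₁ : 0 ≤ δ₁) (hδ₂ : 0 < δ₂)
    (hVnn : ∀ t ∈ Set.Ico (0:ℝ) T, 0 ≤ V t)
    (hCcont : ContinuousOn C (Set.Ico 0 T))
    (hCpos : ∀ t ∈ Set.Ico (0:ℝ) T, 0 < C t)
    (hCanti : AntitoneOn C (Set.Ico 0 T))
    (hC0 : Tendsto C (𝓝[<] T) (𝓝 0))
    (hODE : ∀ t ∈ Set.Ico (0:ℝ) T, HasDerivAt V (δ₁ * V t - δ₂ * V t / C t) t)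
    (hdiv : Tendsto (fun s : ℝ => ∫ t in (0:ℝ)..s, 1 / C t) (𝓝[<] T) atTop)
    (hgain : δ₁ * C 0 < δ₂) :
    Tendsto V (𝓝[<] T) (𝓝 0) :=
  pt_perturbed_linear_model_general T δ₁ δ₂ V C hT hδ₁ hVnn hCcont hCpos hCanti hODE hdiv hgain
end

section
/- Let T > 0, δ₁ ≥ 0, δ₂ > 0, 0 < p < 1, and let 𝒞 : [0,T) → (0,∞) be continuous with ∫₀ᵀ dt/𝒞(t) = +∞ and 𝒞(s) → 0 as s → T⁻. Define V on [0,T) by V(s)^{1−p} = e^{−(1−p)δ₂∫₀ˢ dt/𝒞(t)}·[∫₀ˢ (1−p)δ₁ e^{(1−p)δ₂∫₀ᵗ dx/𝒞(x)} dt + V(0)^{1−p}] with V(0) ≥ 0. Then V(s) → 0 as s → T⁻. -/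
/-!
Write `E s = exp ((1 - p) δ₂ ∫₀ˢ 1 / C)`, so that
`V s ^ (1 - p) = (∫₀ˢ (1 - p) δ₁ E + V 0 ^ (1 - p)) / E s`.
Since `E' = (1 - p) δ₂ E / C`, the integrand is `(δ₁ / δ₂) C E'`, which is `o(E')`
because `C → 0`.
An integral of an `o(E')` function is `o(E)` once `E → ∞` (the L'Hôpital step),
so `V ^ (1 - p) → 0`.
-/

open Filter Set Topology Real Asymptotics MeasureTheory intervalIntegral

section Primitive

variable {F : Type*} [NormedAddCommGroup F] {f : ℝ → F} {a b s t : ℝ}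

theorem ContinuousOn.intervalIntegrable_of_Ico (hf : ContinuousOn f (Ico a b))
    (hs : s ∈ Ico a b) : IntervalIntegrable f volume a s :=
  (hf.mono <| by rw [uIcc_of_le hs.1]; exact Icc_subset_Ico_right hs.2).intervalIntegrable

theorem ContinuousOn.hasDerivAt_integral_of_Ico [NormedSpace ℝ F] [CompleteSpace F]
    (hf : ContinuousOn f (Ico a b)) (ht : t ∈ Ioo a b) :
    HasDerivAt (fun u => ∫ x in a..u, f x) (f t) t :=
  integral_hasDerivAt_right (hf.intervalIntegrable_of_Ico (Ioo_subset_Ico_self ht))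
    ((hf.mono Ioo_subset_Ico_self).stronglyMeasurableAtFilter isOpen_Ioo t ht)
    (hf.continuousAt (Ico_mem_nhds ht.1 ht.2))

theorem ContinuousOn.continuousOn_primitive_Icc_of_Ico [NormedSpace ℝ F]
    (hf : ContinuousOn f (Ico a b)) (hs : s ∈ Ico a b) :
    ContinuousOn (fun u => ∫ x in a..u, f x) (Icc a s) := by
  have hsub : uIcc a s ⊆ Ico a b := by
    rw [uIcc_of_le hs.1]; exact Icc_subset_Ico_right hs.2
  have := continuousOn_primitive_interval (μ := volume)
    ((hf.mono hsub).integrableOn_compact isCompact_uIcc)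
  rwa [uIcc_of_le hs.1] at this

end Primitive

theorem norm_integral_le_mul_sub_of_norm_le_mul_deriv {F : Type*} [NormedAddCommGroup F]
    [NormedSpace ℝ F] {g : ℝ → F} {E E' : ℝ → ℝ} {c a b : ℝ} (hab : a ≤ b)
    (hE : ∀ t ∈ Icc a b, HasDerivAt E (E' t) t) (hE' : ∀ t ∈ Ioo a b, 0 ≤ E' t)
    (hg : ∀ t ∈ Ioc a b, ‖g t‖ ≤ c * E' t) :
    ‖∫ t in a..b, g t‖ ≤ c * (E b - E a) := by
  have hE'_int : IntervalIntegrable E' volume a b := by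
    refine intervalIntegrable_deriv_of_nonneg (g := E) (fun t ht => ?_) (fun t ht => ?_)
      (fun t ht => ?_)
    · exact (hE t (by rwa [uIcc_of_le hab] at ht)).continuousAt.continuousWithinAt
    · exact hE t (by simpa [hab] using Ioo_subset_Icc_self ht)
    · exact hE' t (by simpa [hab] using ht)
  rw [← integral_eq_sub_of_hasDerivAt (fun t ht => hE t (by rwa [uIcc_of_le hab] at ht)) hE'_int,
    ← intervalIntegral.integral_const_mul]
  exact norm_integral_le_of_norm_le hab (ae_of_all _ hg) (hE'_int.const_mul c)

theorem isLittleO_integral_of_isLittleO_deriv {F : Type*} [NormedAddCommGroup F]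
    [NormedSpace ℝ F] {a b : ℝ} {g : ℝ → F} {E E' : ℝ → ℝ} (hab : a < b)
    (hg : ∀ s ∈ Ioo a b, IntervalIntegrable g volume a s)
    (hE : ∀ t ∈ Ioo a b, HasDerivAt E (E' t) t) (hE' : ∀ t ∈ Ioo a b, 0 ≤ E' t)
    (hE_top : Tendsto E (𝓝[<] b) atTop) (hgE' : g =o[𝓝[<] b] E') :
    (fun s => ∫ t in a..s, g t) =o[𝓝[<] b] E := by
  refine isLittleO_iff.2 fun ε hε => ?_
  obtain ⟨s₁, hs₁, hsmall⟩ :=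
    mem_nhdsLT_iff_exists_Ioo_subset.mp (isLittleO_iff.mp hgE' (half_pos hε))
  obtain ⟨s₀, hs₀, hs₀b⟩ := exists_between (max_lt hab hs₁)
  have has₀ : a < s₀ := (le_max_left _ _).trans_lt hs₀
  set K := ‖∫ t in a..s₀, g t‖
  filter_upwards [Ioo_mem_nhdsLT hs₀b, hE_top.eventually_ge_atTop (max 0 (2 / ε * K - E s₀))]
    with s hs hEs
  have htail : ‖∫ t in s₀..s, g t‖ ≤ ε / 2 * (E s - E s₀) := by
    refine norm_integral_le_mul_sub_of_norm_le_mul_deriv hs.1.le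
      (fun t ht => hE t ⟨has₀.trans_le ht.1, ht.2.trans_lt hs.2⟩)
      (fun t ht => hE' t ⟨has₀.trans ht.1, ht.2.trans hs.2⟩) (fun t ht => ?_)
    have hgt : ‖g t‖ ≤ ε / 2 * ‖E' t‖ :=
      hsmall ⟨(le_max_right _ _).trans_lt (hs₀.trans ht.1), ht.2.trans_lt hs.2⟩
    rwa [Real.norm_of_nonneg (hE' t ⟨has₀.trans ht.1, ht.2.trans_lt hs.2⟩)] at hgt
  have hsplit : ∫ t in a..s, g t = (∫ t in a..s₀, g t) + ∫ t in s₀..s, g t :=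
    (integral_add_adjacent_intervals (hg s₀ ⟨has₀, hs₀b⟩)
      ((hg s₀ ⟨has₀, hs₀b⟩).symm.trans (hg s ⟨has₀.trans hs.1, hs.2⟩))).symm
  have hK : K ≤ ε / 2 * (E s + E s₀) := by
    have := mul_le_mul_of_nonneg_left ((le_max_right _ _).trans hEs) (half_pos hε).le
    field_simp at this ⊢
    linarith
  rw [hsplit, Real.norm_of_nonneg ((le_max_left _ _).trans hEs)]
  linarith [norm_add_le (∫ t in a..s₀, g t) (∫ t in s₀..s, g t)]

theorem Filter.Tendsto.of_rpow_nhds_zero {α : Type*} {l : Filter α} {f : α → ℝ} {q : ℝ}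
    (hq : 0 < q) (hf : ∀ᶠ x in l, 0 ≤ f x) (h : Tendsto (fun x => f x ^ q) l (𝓝 0)) :
    Tendsto f l (𝓝 0) := by
  have := h.rpow_const (p := q⁻¹) (Or.inr (inv_pos.2 hq).le)
  rw [zero_rpow (inv_ne_zero hq.ne')] at this
  exact this.congr' (hf.mono fun x hx => rpow_rpow_inv hx hq.ne')

theorem isLittleO_integral_exp_mul_primitive_inv {C : ℝ → ℝ} {a b k : ℝ} (hab : a < b)
    (hk : 0 < k) (hCcont : ContinuousOn C (Ico a b)) (hCpos : ∀ t ∈ Ico a b, 0 < C t)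
    (hC0 : Tendsto C (𝓝[<] b) (𝓝 0))
    (hdiv : Tendsto (fun s => ∫ t in a..s, 1 / C t) (𝓝[<] b) atTop) :
    (fun s => ∫ t in a..s, exp (k * ∫ x in a..t, 1 / C x)) =o[𝓝[<] b]
      fun s => exp (k * ∫ x in a..s, 1 / C x) := by
  set I : ℝ → ℝ := fun s => ∫ t in a..s, 1 / C t
  have hf : ContinuousOn (fun t => 1 / C t) (Ico a b) :=
    continuousOn_const.div hCcont fun t ht => (hCpos t ht).ne'
  have hE' : ∀ t ∈ Ioo a b,
      HasDerivAt (fun s => exp (k * I s)) (exp (k * I t) * (k * (1 / C t))) t :=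
    fun t ht => ((hf.hasDerivAt_integral_of_Ico ht).const_mul k).exp
  have hE'_nonneg : ∀ t ∈ Ioo a b, 0 ≤ exp (k * I t) * (k * (1 / C t)) := fun t ht => by
    have := hCpos t (Ioo_subset_Ico_self ht)
    positivity
  have hint : ∀ s ∈ Ioo a b, IntervalIntegrable (fun t => exp (k * I t)) volume a s := by
    intro s hs
    have hI := hf.continuousOn_primitive_Icc_of_Ico (Ioo_subset_Ico_self hs)
    refine ContinuousOn.intervalIntegrable ?_
    rw [uIcc_of_le hs.1.le]
    fun_prop
  have hC : (fun t => C t / k) =o[𝓝[<] b] (fun _ => (1 : ℝ)) :=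
    (isLittleO_one_iff ℝ).2 (by simpa using hC0.div_const k)
  have hsmall :
      (fun t => exp (k * I t)) =o[𝓝[<] b] fun t => exp (k * I t) * (k * (1 / C t)) := by
    refine (hC.mul_isBigO (isBigO_refl _ _)).congr' ?_ (Eventually.of_forall fun _ => one_mul _)
    filter_upwards [Ico_mem_nhdsLT hab] with t ht
    field_simp [(hCpos t ht).ne', hk.ne']
  exact isLittleO_integral_of_isLittleO_deriv hab hint hE' hE'_nonneg
    (tendsto_exp_atTop.comp (hdiv.const_mul_atTop hk)) hsmall

theorem pt_perturbed_sublinear_model_general (T δ₁ δ₂ p : ℝ) (V C : ℝ → ℝ) (hT : 0 < T)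
    (hδ₂ : 0 < δ₂) (hp1 : p < 1)
    (hVnn : ∀ t ∈ Set.Ico (0:ℝ) T, 0 ≤ V t)
    (hCcont : ContinuousOn C (Set.Ico 0 T))
    (hCpos : ∀ t ∈ Set.Ico (0:ℝ) T, 0 < C t)
    (hC0 : Tendsto C (𝓝[<] T) (𝓝 0))
    (hdiv : Tendsto (fun s : ℝ => ∫ t in (0:ℝ)..s, 1 / C t) (𝓝[<] T) atTop)
    (hV : ∀ s ∈ Set.Ico (0:ℝ) T,
      V s ^ (1 - p) =
        Real.exp (-(1 - p) * δ₂ * ∫ t in (0:ℝ)..s, 1 / C t) *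
          ((∫ t in (0:ℝ)..s,
              (1 - p) * δ₁ * Real.exp ((1 - p) * δ₂ * ∫ x in (0:ℝ)..t, 1 / C x)) +
            V 0 ^ (1 - p))) :
    Tendsto V (𝓝[<] T) (𝓝 0) := by
  have hk : 0 < (1 - p) * δ₂ := mul_pos (sub_pos.2 hp1) hδ₂
  have hJ := isLittleO_integral_exp_mul_primitive_inv hT hk hCcont hCpos hC0 hdiv
  have hE_top := tendsto_exp_atTop.comp (hdiv.const_mul_atTop hk)
  have hVp : Tendsto (fun s => V s ^ (1 - p)) (𝓝[<] T) (𝓝 0) := by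
    have := (hJ.tendsto_div_nhds_zero.const_mul ((1 - p) * δ₁)).add
      ((tendsto_inv_atTop_zero.comp hE_top).const_mul (V 0 ^ (1 - p)))
    rw [mul_zero, mul_zero, add_zero] at this
    refine this.congr' ?_
    filter_upwards [Ico_mem_nhdsLT hT] with s hs
    rw [hV s hs, neg_mul, neg_mul, exp_neg, intervalIntegral.integral_const_mul]
    simp only [Function.comp_apply, div_eq_mul_inv]
    ring
  exact hVp.of_rpow_nhds_zero (sub_pos.2 hp1) (eventually_of_mem (Ico_mem_nhdsLT hT) hVnn)

theorem pt_perturbed_sublinear_model (T δ₁ δ₂ p : ℝ) (V C : ℝ → ℝ) (hT : 0 < T)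
    (hδ₁ : 0 ≤ δ₁) (hδ₂ : 0 < δ₂) (hp0 : 0 < p) (hp1 : p < 1)
    (hVnn : ∀ t ∈ Set.Ico (0:ℝ) T, 0 ≤ V t)
    (hCcont : ContinuousOn C (Set.Ico 0 T))
    (hCpos : ∀ t ∈ Set.Ico (0:ℝ) T, 0 < C t)
    (hC0 : Tendsto C (𝓝[<] T) (𝓝 0))
    (hdiv : Tendsto (fun s : ℝ => ∫ t in (0:ℝ)..s, 1 / C t) (𝓝[<] T) atTop)
    (hV : ∀ s ∈ Set.Ico (0:ℝ) T,
      V s ^ (1 - p) =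
        Real.exp (-(1 - p) * δ₂ * ∫ t in (0:ℝ)..s, 1 / C t) *
          ((∫ t in (0:ℝ)..s,
              (1 - p) * δ₁ * Real.exp ((1 - p) * δ₂ * ∫ x in (0:ℝ)..t, 1 / C x)) +
            V 0 ^ (1 - p))) :
    Tendsto V (𝓝[<] T) (𝓝 0) :=
  pt_perturbed_sublinear_model_general T δ₁ δ₂ p V C hT hδ₂ hp1 hVnn hCcont hCpos hC0 hdiv hV
end

section
/- Let T > 0, H_f > 0, λ < 0, and η > (H_f·T^ℓ + 1)/|λ| with ℓ ≥ 1. Let W : [0,T) → ℝ be nonnegative, differentiable, satisfying W'(t) ≤ 2H_f W(t) + 2λη W(t)/(T−t)^ℓ. Then W(t) → 0 as t → T⁻. -/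
/-!
Multiplying the differential inequality by `(T - t) ^ ℓ`, the bound on `η` lets the coupling
term absorb the drift `2 H_f W`, and `(T - t) ^ ℓ ≤ T ^ (ℓ - 1) (T - t)` reduces it to
`(T - t) W' ≤ -c W` with `c = 2 / T ^ (ℓ - 1) > 0`. Then `W (T - t) ^ (-c)` is nonincreasing,
so `0 ≤ W t ≤ W 0 T ^ (-c) (T - t) ^ c`, which tends to `0` as `t → T⁻`.
-/

open Filter Set Topology Real

lemma mul_lt_neg_of_div_abs_lt {a b η : ℝ} (ha : a < 0) (h : b / |a| < η) : a * η < -b := by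
  rw [abs_of_neg ha, div_lt_iff₀ (neg_pos.2 ha)] at h
  linarith

lemma rpow_le_rpow_sub_one_mul {s T ℓ : ℝ} (hs : 0 < s) (hsT : s ≤ T) (hℓ : 1 ≤ ℓ) :
    s ^ ℓ ≤ T ^ (ℓ - 1) * s := by
  calc s ^ ℓ = s ^ (ℓ - 1) * s := by rw [← rpow_add_one hs.ne', sub_add_cancel]
    _ ≤ T ^ (ℓ - 1) * s := by gcongr

lemma mul_deriv_le_of_lyapunov_ineq {T Hf lam η ℓ s w w' : ℝ} (hHf : 0 ≤ Hf) (hℓ : 1 ≤ ℓ)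
    (hlη : lam * η ≤ -(Hf * T ^ ℓ + 1)) (hs : 0 < s) (hsT : s ≤ T) (hw : 0 ≤ w)
    (h : w' ≤ 2 * Hf * w + 2 * lam * η * w / s ^ ℓ) :
    s * w' ≤ -(2 / T ^ (ℓ - 1)) * w := by
  have hsℓ : 0 < s ^ ℓ := rpow_pos_of_pos hs ℓ
  have hsℓT : s ^ ℓ ≤ T ^ ℓ := rpow_le_rpow hs.le hsT (by linarith)
  have hscaled : w' * s ^ ℓ ≤ -2 * w :=
    calc w' * s ^ ℓ ≤ (2 * Hf * w + 2 * lam * η * w / s ^ ℓ) * s ^ ℓ := by gcongr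
      _ = 2 * Hf * w * s ^ ℓ + 2 * (lam * η) * w := by field_simp
      _ ≤ 2 * Hf * w * T ^ ℓ + 2 * (-(Hf * T ^ ℓ + 1)) * w := by gcongr
      _ = -2 * w := by ring
  have hw' : w' ≤ 0 := nonpos_of_mul_nonpos_left (hscaled.trans (by linarith)) hsℓ
  have hk : 0 < T ^ (ℓ - 1) := rpow_pos_of_pos (hs.trans_le hsT) _
  have hlin : w' * (T ^ (ℓ - 1) * s) ≤ -2 * w :=
    (mul_le_mul_of_nonpos_left (rpow_le_rpow_sub_one_mul hs hsT hℓ) hw').trans hscaled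
  rw [neg_mul, div_mul_eq_mul_div, ← neg_div, le_div_iff₀ hk]
  linarith

section SubMulDerivLe

variable {f f' : ℝ → ℝ} {a T c : ℝ}

theorem antitoneOn_mul_rpow_neg_of_sub_mul_deriv_le
    (hf : ∀ t ∈ Ico a T, HasDerivAt f (f' t) t)
    (h : ∀ t ∈ Ico a T, (T - t) * f' t ≤ -c * f t) :
    AntitoneOn (fun t => f t * (T - t) ^ (-c)) (Ico a T) := by
  have hderiv : ∀ t ∈ Ico a T, HasDerivAt (fun t => f t * (T - t) ^ (-c))
      (f' t * (T - t) ^ (-c) + f t * (-1 * -c * (T - t) ^ (-c - 1))) t := fun t ht =>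
    (hf t ht).mul (((hasDerivAt_id t).const_sub T).rpow_const (Or.inl (sub_pos.2 ht.2).ne'))
  refine antitoneOn_of_deriv_nonpos (convex_Ico a T)
    (fun t ht => (hderiv t ht).continuousAt.continuousWithinAt)
    (fun t ht => (hderiv t (interior_subset ht)).differentiableAt.differentiableWithinAt)
    fun t ht => ?_
  replace ht : t ∈ Ico a T := interior_subset ht
  have hs : 0 < T - t := sub_pos.2 ht.2
  rw [(hderiv t ht).deriv]
  calc f' t * (T - t) ^ (-c) + f t * (-1 * -c * (T - t) ^ (-c - 1))
      = (T - t) ^ (-c - 1) * ((T - t) * f' t + c * f t) := by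
        rw [show -c = -c - 1 + 1 by ring, rpow_add_one hs.ne']; ring_nf
    _ ≤ 0 := mul_nonpos_of_nonneg_of_nonpos (rpow_nonneg hs.le _) (by linarith [h t ht])

theorem le_mul_rpow_of_sub_mul_deriv_le (ha : a < T)
    (hf : ∀ t ∈ Ico a T, HasDerivAt f (f' t) t)
    (h : ∀ t ∈ Ico a T, (T - t) * f' t ≤ -c * f t) {t : ℝ} (ht : t ∈ Ico a T) :
    f t ≤ f a * (T - a) ^ (-c) * (T - t) ^ c := by
  have hs : 0 < T - t := sub_pos.2 ht.2
  calc f t = f t * (T - t) ^ (-c) * (T - t) ^ c := by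
        rw [mul_assoc, ← rpow_add hs, neg_add_cancel, rpow_zero, mul_one]
    _ ≤ f a * (T - a) ^ (-c) * (T - t) ^ c := mul_le_mul_of_nonneg_right
        (antitoneOn_mul_rpow_neg_of_sub_mul_deriv_le hf h ⟨le_rfl, ha⟩ ht ht.1)
        (rpow_nonneg hs.le c)

theorem tendsto_nhdsLT_zero_of_sub_mul_deriv_le (ha : a < T) (hc : 0 < c)
    (hf₀ : ∀ t ∈ Ico a T, 0 ≤ f t) (hf : ∀ t ∈ Ico a T, HasDerivAt f (f' t) t)
    (h : ∀ t ∈ Ico a T, (T - t) * f' t ≤ -c * f t) :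
    Tendsto f (𝓝[<] T) (𝓝 0) := by
  have hIco : Ico a T ∈ 𝓝[<] T := Ico_mem_nhdsLT ha
  have hbound : Tendsto (fun t => f a * (T - a) ^ (-c) * (T - t) ^ c) (𝓝[<] T) (𝓝 0) := by
    have hcont : ContinuousAt (fun t => f a * (T - a) ^ (-c) * (T - t) ^ c) T :=
      continuousAt_const.mul ((continuousAt_const.sub continuousAt_id).rpow_const (Or.inr hc.le))
    simpa [zero_rpow hc.ne'] using hcont.tendsto.mono_left nhdsWithin_le_nhds
  exact squeeze_zero' (eventually_of_mem hIco hf₀)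
    (eventually_of_mem hIco fun t ht => le_mul_rpow_of_sub_mul_deriv_le ha hf h ht) hbound

end SubMulDerivLe

theorem pt_lyapunov_synchronization (T Hf lam η ℓ : ℝ) (W W' : ℝ → ℝ)
    (hT : 0 < T) (hHf : 0 < Hf) (hlam : lam < 0) (hℓ : 1 ≤ ℓ)
    (hη : (Hf * T ^ ℓ + 1) / |lam| < η)
    (hWnn : ∀ t ∈ Set.Ico (0:ℝ) T, 0 ≤ W t)
    (hderiv : ∀ t ∈ Set.Ico (0:ℝ) T, HasDerivAt W (W' t) t)
    (hineq : ∀ t ∈ Set.Ico (0:ℝ) T,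
      W' t ≤ 2 * Hf * W t + 2 * lam * η * W t / (T - t) ^ ℓ) :
    Tendsto W (𝓝[<] T) (𝓝 0) := by
  have hlη : lam * η ≤ -(Hf * T ^ ℓ + 1) := (mul_lt_neg_of_div_abs_lt hlam hη).le
  refine tendsto_nhdsLT_zero_of_sub_mul_deriv_le (c := 2 / T ^ (ℓ - 1)) hT (by positivity)
    hWnn hderiv fun t ht => ?_
  exact mul_deriv_le_of_lyapunov_ineq hHf.le hℓ hlη (sub_pos.2 ht.2) (by linarith [ht.1])
    (hWnn t ht) (hineq t ht)
end
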